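/- arXiv:1512.06030 — 5 statements merged into one kernel-verified Lean document; each statement's English description precedes it below -/
import Mathlib

section
/- Let A be a (2n+1)×(2n+1) DASASM, and let N(A) be the number of zeros among the first n entries A_{1,n+1}, …, A_{n,n+1} of the central column of A. Then the central entry satisfies A_{n+1,n+1} = (−1)^{n+N(A)}; in particular A_{n+1,n+1} ∈ {1, −1}. -/
/-- `A` is an alternating sign matrix: in every row and every column the entries lie in
`{-1,0,1}`, the partial sums (from one end) are all `0` or `1`, and the full sums are `1`
(equivalently, the nonzero entries of every row and column alternate in sign and sum to `1`). -/
def IsAsm {n : ℕ} (A : Matrix (Fin n) (Fin n) ℤ) : Prop :=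
  (∀ i j, A i j = -1 ∨ A i j = 0 ∨ A i j = 1) ∧
  (∀ i k : Fin n, (∑ j ∈ Finset.Iic k, A i j) = 0 ∨ (∑ j ∈ Finset.Iic k, A i j) = 1) ∧
  (∀ i : Fin n, (∑ j, A i j) = 1) ∧
  (∀ j k : Fin n, (∑ i ∈ Finset.Iic k, A i j) = 0 ∨ (∑ i ∈ Finset.Iic k, A i j) = 1) ∧
  (∀ j : Fin n, (∑ i, A i j) = 1)
/-- `A` is a diagonally and antidiagonally symmetric alternating sign matrix:
`A i j = A j i` and `A i j = A (n+1-j) (n+1-i)` (in 1-based indexing). -/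
def IsDasasm {n : ℕ} (A : Matrix (Fin n) (Fin n) ℤ) : Prop :=
  IsAsm A ∧ ∀ i j, A i j = A j i ∧ A i j = A j.rev i.rev

/-- The set of `(2n+1) × (2n+1)` DASASMs. -/
def dasasmSet (n : ℕ) : Set (Matrix (Fin (2*n+1)) (Fin (2*n+1)) ℤ) := {A | IsDasasm A}

/-!
Combining the two symmetries, the central column of a DASASM is a palindrome, so its sum `1`
equals `2 S + A_cc`, where `S` is the sum of its first `n` entries. As a partial column sum, `S`
is `0` or `1`, hence `A_cc = 1 - 2 S = (-1) ^ S`. Modulo `2` an entry in `{-1, 0, 1}` is `1`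
unless it is `0`, so `S ≡ n + N(A)`.
-/

open Finset

theorem Fin.sum_eq_two_nsmul_sum_Iio_add_of_rev {M : Type*} [AddCommMonoid M] {m : ℕ}
    {f : Fin m → M} (hf : ∀ i, f i.rev = f i) {c : Fin m} (hc : c.rev = c) :
    ∑ i, f i = 2 • ∑ i ∈ Iio c, f i + f c := by
  have hIoi : ∑ i ∈ Ioi c, f i = ∑ i ∈ Iio c, f i := by
    conv_lhs => rw [← hc, ← Fin.map_revPerm_Iio, sum_map]
    simp [hf]
  rw [← sum_filter_add_sum_filter_not univ (· ≤ c), filter_ge_eq_Iic, ← Iio_insert,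
    sum_insert notMem_Iio_self]
  simp only [not_le, filter_lt_eq_Ioi, hIoi]
  abel

theorem Int.sum_modEq_card_add_card_filter_eq_zero {ι : Type*} {s : Finset ι} {f : ι → ℤ}
    (hf : ∀ i ∈ s, f i = -1 ∨ f i = 0 ∨ f i = 1) :
    ∑ i ∈ s, f i ≡ #s + #{i ∈ s | f i = 0} [ZMOD 2] := by
  have hterm : ∀ i ∈ s, f i ≡ 1 + if f i = 0 then 1 else 0 [ZMOD 2] := by
    intro i hi
    rcases hf i hi with h | h | h <;> simp [h] <;> decide
  calc ∑ i ∈ s, f i ≡ ∑ i ∈ s, (1 + if f i = 0 then 1 else 0) [ZMOD 2] := Int.ModEq.sum hterm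
    _ = #s + #{i ∈ s | f i = 0} := by simp [sum_add_distrib]

theorem Int.neg_one_pow_eq_one_sub_two_mul {S : ℤ} {k : ℕ} (hS : S = 0 ∨ S = 1)
    (hk : S ≡ k [ZMOD 2]) : (-1 : ℤ) ^ k = 1 - 2 * S := by
  rw [Int.ModEq] at hk
  rcases k.even_or_odd with hk' | hk'
  · rw [hk'.neg_one_pow]
    rw [Nat.even_iff] at hk'
    omega
  · rw [hk'.neg_one_pow]
    rw [Nat.odd_iff] at hk'
    omega

theorem IsAsm.sum_Iio_col_eq_zero_or_one {m : ℕ} {A : Matrix (Fin m) (Fin m) ℤ} (hA : IsAsm A)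
    (j k : Fin m) : ∑ i ∈ Iio k, A i j = 0 ∨ ∑ i ∈ Iio k, A i j = 1 := by
  by_cases hk : IsMin k
  · simp [Iio_eq_empty.mpr hk]
  · rw [← Iic_pred_eq_Iio_of_not_isMin hk]
    exact hA.2.2.2.1 j _

theorem IsDasasm.apply_rev_of_rev_eq {m : ℕ} {A : Matrix (Fin m) (Fin m) ℤ} (hA : IsDasasm A)
    {j : Fin m} (hj : j.rev = j) (i : Fin m) : A i.rev j = A i j := by
  rw [(hA.2 i j).2, hj, (hA.2 j i.rev).1]

/-- For a `(2n+1) × (2n+1)` DASASM `A`, the central entry equals `(-1)^(n + N(A))`,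
where `N(A)` is the number of `0`s among the first `n` entries of the central column;
in particular the central entry is `1` or `-1`. -/
theorem dasasm_central_entry (n : ℕ) (A : Matrix (Fin (2*n+1)) (Fin (2*n+1)) ℤ)
    (hA : IsDasasm A) :
    A ⟨n, by omega⟩ ⟨n, by omega⟩ =
      (-1 : ℤ) ^ (n + (Finset.univ.filter
        (fun i : Fin (2*n+1) => (i : ℕ) < n ∧ A i ⟨n, by omega⟩ = 0)).card) ∧
    (A ⟨n, by omega⟩ ⟨n, by omega⟩ = 1 ∨ A ⟨n, by omega⟩ ⟨n, by omega⟩ = -1) := by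
  set c : Fin (2*n+1) := ⟨n, by omega⟩
  have hc : c.rev = c := by ext; simp [c]; omega
  have hcol : 2 * ∑ i ∈ Iio c, A i c + A c c = 1 := by
    simpa [hA.1.2.2.2.2 c] using (Fin.sum_eq_two_nsmul_sum_Iio_add_of_rev
      (f := fun i => A i c) (hA.apply_rev_of_rev_eq hc) hc).symm
  have hS := hA.1.sum_Iio_col_eq_zero_or_one c c
  have hpar := Int.sum_modEq_card_add_card_filter_eq_zero (s := Iio c) (fun i _ => hA.1.1 i c)
  have hzeros : univ.filter (fun i : Fin (2*n+1) => (i : ℕ) < n ∧ A i c = 0) =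
      {i ∈ Iio c | A i c = 0} := by
    ext; simp [c, Fin.lt_def]
  rw [Fin.card_Iio] at hpar
  rw [hzeros, Int.neg_one_pow_eq_one_sub_two_mul hS (by exact_mod_cast hpar)]
  omega
end

section
/- For every integer n ≥ 1, the number of (2n+1)×(2n+1) DASASMs is divisible by 3. -/
/-
The central `3 × 3` block of a DASASM `A` of order `2k + 3` (rows and columns `k, k+1, k+2`) has,
by the two symmetries, the shape `!![x, y, z; y, w, y; z, y, x]`. Through the symmetries, every
ASM condition that involves the block reduces to a condition on rows `k` and `k + 1`, and these see
the rest of the matrix only through the row sums `p, q` of rows `k, k+1` to the left of the block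
and `r` of row `k` to its right, each of which is `0` or `1`. For all such `p, q, r` there are
exactly three admissible blocks, so the DASASMs sharing the entries outside the block come in
groups of three.
-/

open Finset

section AsmLines
variable {m : ℕ}

lemma sum_Iic_add_sum_Ioi {M : Type*} [AddCommMonoid M] (v : Fin m → M) (t : Fin m) :
    ∑ j ∈ Iic t, v j + ∑ j ∈ Ioi t, v j = ∑ j, v j := by
  rw [← sum_union (disjoint_left.2 fun _ h₁ h₂ => (mem_Iic.1 h₁).not_gt (mem_Ioi.1 h₂))]
  congr
  ext j
  simp [le_or_gt]

lemma sum_Ioi_eq_sum_Iio_rev {M : Type*} [AddCommMonoid M] (v : Fin m → M) (t : Fin m) :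
    ∑ j ∈ Ioi t, v j = ∑ j ∈ Iio t.rev, v j.rev := by
  rw [← Fin.rev_rev t, ← Fin.map_revPerm_Iio, sum_map, Fin.rev_rev]
  rfl

def IsAsmLine (v : Fin m → ℤ) : Prop :=
  (∀ t, ∑ j ∈ Iic t, v j = 0 ∨ ∑ j ∈ Iic t, v j = 1) ∧ ∑ j, v j = 1

namespace IsAsmLine

variable {v w : Fin m → ℤ}

lemma sum_Iio (hv : IsAsmLine v) (t : Fin m) :
    ∑ j ∈ Iio t, v j = 0 ∨ ∑ j ∈ Iio t, v j = 1 := by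
  rcases Nat.eq_zero_or_pos t.val with ht | ht
  · left
    rw [show Iio t = ∅ by ext j; simp [Fin.lt_def, ht], sum_empty]
  · have hIio : Iio t = Iic ⟨t - 1, by omega⟩ := by
      ext j
      simp only [mem_Iio, mem_Iic, Fin.lt_def, Fin.le_def]
      omega
    rw [hIio]
    exact hv.1 _

lemma sum_Ioi (hv : IsAsmLine v) (t : Fin m) :
    ∑ j ∈ Ioi t, v j = 0 ∨ ∑ j ∈ Ioi t, v j = 1 := by
  have := sum_Iic_add_sum_Ioi v t
  have := hv.2
  rcases hv.1 t with h | h <;> omega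

lemma comp_rev (hv : IsAsmLine v) : IsAsmLine (v ∘ Fin.rev) := by
  have hsum : ∑ j : Fin m, v j.rev = 1 := (Equiv.sum_comp Fin.revPerm v).trans hv.2
  refine ⟨fun t => ?_, hsum⟩
  have hsplit := sum_Iic_add_sum_Ioi (fun j => v j.rev) t
  simp only [sum_Ioi_eq_sum_Iio_rev (fun j => v j.rev), Fin.rev_rev] at hsplit
  change ∑ j ∈ Iic t, v j.rev = 0 ∨ ∑ j ∈ Iic t, v j.rev = 1
  rcases hv.sum_Iio t.rev with h | h <;> omega

lemma of_eqOn_compl_Icc (hv : IsAsmLine v) {a b : Fin m}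
    (hlo : ∀ j < a, w j = v j) (hhi : ∀ j, b < j → w j = v j)
    (hwin : ∀ t ∈ Icc a b, ∑ j ∈ Iic t, w j = 0 ∨ ∑ j ∈ Iic t, w j = 1)
    (hb : ∑ j ∈ Iic b, w j = ∑ j ∈ Iic b, v j) : IsAsmLine w := by
  have hsum : ∑ j, w j = ∑ j, v j := by
    rw [← sum_Iic_add_sum_Ioi w b, ← sum_Iic_add_sum_Ioi v b, hb,
      sum_congr rfl fun j hj => hhi j (mem_Ioi.1 hj)]
  refine ⟨fun t => ?_, hsum.trans hv.2⟩
  rcases lt_or_ge t a with hta | hat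
  · rw [sum_congr rfl fun j hj => hlo j ((mem_Iic.1 hj).trans_lt hta)]
    exact hv.1 t
  rcases le_or_gt t b with htb | hbt
  · exact hwin t (mem_Icc.2 ⟨hat, htb⟩)
  · have htail : ∑ j ∈ Ioi t, w j = ∑ j ∈ Ioi t, v j :=
      sum_congr rfl fun j hj => hhi j (hbt.trans (mem_Ioi.1 hj))
    have := sum_Iic_add_sum_Ioi w t
    have := sum_Iic_add_sum_Ioi v t
    have := hv.2
    rcases hv.1 t with h | h <;> omega

end IsAsmLine

lemma IsAsm.isAsmLine_row {A : Matrix (Fin m) (Fin m) ℤ} (hA : IsAsm A) (i : Fin m) :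
    IsAsmLine (A i) :=
  ⟨hA.2.1 i, hA.2.2.1 i⟩

lemma isAsm_of_isSymm {A : Matrix (Fin m) (Fin m) ℤ} (hA : A.IsSymm)
    (hent : ∀ i j, A i j = -1 ∨ A i j = 0 ∨ A i j = 1) (hrow : ∀ i, IsAsmLine (A i)) :
    IsAsm A := by
  have hcol (j : Fin m) : (fun i => A i j) = A j := funext fun i => hA.apply j i
  exact ⟨hent, fun i => (hrow i).1, fun i => (hrow i).2,
    fun j => hcol j ▸ (hrow j).1, fun j => hcol j ▸ (hrow j).2⟩

lemma setOf_isAsm_finite (m : ℕ) : {A : Matrix (Fin m) (Fin m) ℤ | IsAsm A}.Finite := by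
  refine (Set.Finite.pi fun _ => Set.Finite.pi fun _ => Set.toFinite {-1, 0, 1}).subset ?_
  intro A hA i _ j _
  simpa using hA.1 i j

lemma row_rev_eq_comp_rev {α : Type*} {A : Matrix (Fin m) (Fin m) α} (hs : A.IsSymm)
    (hr : ∀ i j, A i j = A j.rev i.rev) (i : Fin m) : A i.rev = A i ∘ Fin.rev :=
  funext fun j => by rw [Function.comp_apply, ← hs.apply i.rev j, hr, Fin.rev_rev]

lemma IsDasasm.isSymm {A : Matrix (Fin m) (Fin m) ℤ} (hA : IsDasasm A) : A.IsSymm :=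
  Matrix.IsSymm.ext fun i j => (hA.2 j i).1

lemma IsDasasm.apply_rev {A : Matrix (Fin m) (Fin m) ℤ} (hA : IsDasasm A) (i j : Fin m) :
    A i j = A j.rev i.rev :=
  (hA.2 i j).2

end AsmLines

namespace CentralBlock

abbrev OddMat (k : ℕ) := Matrix (Fin (2 * (k + 1) + 1)) (Fin (2 * (k + 1) + 1)) ℤ

variable {k : ℕ}

def c0 (k : ℕ) : Fin (2 * (k + 1) + 1) := ⟨k, by omega⟩
def c1 (k : ℕ) : Fin (2 * (k + 1) + 1) := ⟨k + 1, by omega⟩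
def c2 (k : ℕ) : Fin (2 * (k + 1) + 1) := ⟨k + 2, by omega⟩

@[simp] lemma val_c0 : (c0 k : ℕ) = k := rfl
@[simp] lemma val_c1 : (c1 k : ℕ) = k + 1 := rfl
@[simp] lemma val_c2 : (c2 k : ℕ) = k + 2 := rfl

lemma rev_c0 : (c0 k).rev = c2 k := by ext; simp only [Fin.val_rev, val_c0, val_c2]; omega
lemma rev_c1 : (c1 k).rev = c1 k := by ext; simp only [Fin.val_rev, val_c1]; omega
lemma rev_c2 : (c2 k).rev = c0 k := by ext; simp only [Fin.val_rev, val_c0, val_c2]; omega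

lemma eq_c0_or_eq_c1_or_eq_c2 {i : Fin (2 * (k + 1) + 1)} (h₁ : k ≤ (i : ℕ))
    (h₂ : (i : ℕ) ≤ k + 2) : i = c0 k ∨ i = c1 k ∨ i = c2 k := by
  simp only [Fin.ext_iff, val_c0, val_c1, val_c2]
  omega

lemma Iio_c1 : Iio (c1 k) = Iic (c0 k) := by
  ext j; simp only [mem_Iio, mem_Iic, Fin.lt_def, Fin.le_def, val_c0, val_c1]; omega
lemma Iio_c2 : Iio (c2 k) = Iic (c1 k) := by
  ext j; simp only [mem_Iio, mem_Iic, Fin.lt_def, Fin.le_def, val_c1, val_c2]; omega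
lemma Icc_c0_c2 : Icc (c0 k) (c2 k) = {c0 k, c1 k, c2 k} := by
  ext j
  simp only [mem_Icc, mem_insert, mem_singleton, Fin.le_def, Fin.ext_iff, val_c0, val_c1, val_c2]
  omega

section Sums
variable (g : Fin (2 * (k + 1) + 1) → ℤ)

lemma sum_Iic_c0 : ∑ j ∈ Iic (c0 k), g j = ∑ j ∈ Iio (c0 k), g j + g (c0 k) :=
  (sum_Iio_add_eq_sum_Iic _).symm
lemma sum_Iic_c1 : ∑ j ∈ Iic (c1 k), g j = ∑ j ∈ Iio (c0 k), g j + g (c0 k) + g (c1 k) := by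
  rw [← sum_Iio_add_eq_sum_Iic, Iio_c1, sum_Iic_c0]
lemma sum_Iic_c2 :
    ∑ j ∈ Iic (c2 k), g j = ∑ j ∈ Iio (c0 k), g j + g (c0 k) + g (c1 k) + g (c2 k) := by
  rw [← sum_Iio_add_eq_sum_Iic, Iio_c2, sum_Iic_c1]

end Sums

def leftSum0 (A : OddMat k) : ℤ := ∑ j ∈ Iio (c0 k), A (c0 k) j
def leftSum1 (A : OddMat k) : ℤ := ∑ j ∈ Iio (c0 k), A (c1 k) j
def rightSum0 (A : OddMat k) : ℤ := ∑ j ∈ Ioi (c2 k), A (c0 k) j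

def blockOf (A : OddMat k) : ℤ × ℤ × ℤ × ℤ :=
  (A (c0 k) (c0 k), A (c0 k) (c1 k), A (c0 k) (c2 k), A (c1 k) (c1 k))

/-- `setBlock A (x, y, z, w)` replaces the central block of `A` by
`!![x, y, z; y, w, y; z, y, x]`. -/
def setBlock (A : OddMat k) (t : ℤ × ℤ × ℤ × ℤ) : OddMat k := fun i j =>
  if k ≤ (i : ℕ) ∧ (i : ℕ) ≤ k + 2 ∧ k ≤ (j : ℕ) ∧ (j : ℕ) ≤ k + 2 then
    if ((i : ℕ) + j) % 2 = 1 then t.2.1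
    else if (i : ℕ) = k + 1 then t.2.2.2
    else if (i : ℕ) = j then t.1 else t.2.2.1
  else A i j

-- `2 * q + 2 * y + w = 1` is the full sum of row `k + 1`, which is a palindrome.
def Admissible (p q r : ℤ) : ℤ × ℤ × ℤ × ℤ → Prop
  | (x, y, z, w) =>
    (x = -1 ∨ x = 0 ∨ x = 1) ∧ (y = -1 ∨ y = 0 ∨ y = 1) ∧ (z = -1 ∨ z = 0 ∨ z = 1) ∧
    (p + x = 0 ∨ p + x = 1) ∧ (p + x + y = 0 ∨ p + x + y = 1) ∧ p + x + y + z + r = 1 ∧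
    (q + y = 0 ∨ q + y = 1) ∧ 2 * q + 2 * y + w = 1

def admissibleBlock (p q r : ℤ) : Fin 3 → ℤ × ℤ × ℤ × ℤ :=
  ![(-p, 0, 1 - r, 1 - 2 * q), (1 - p, 0, -r, 1 - 2 * q), (q - p, 1 - 2 * q, q - r, 2 * q - 1)]

lemma admissible_iff_mem_range {p q r : ℤ} (hp : p = 0 ∨ p = 1) (hq : q = 0 ∨ q = 1)
    (hr : r = 0 ∨ r = 1) {t : ℤ × ℤ × ℤ × ℤ} :
    Admissible p q r t ↔ t ∈ Set.range (admissibleBlock p q r) := by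
  obtain ⟨x, y, z, w⟩ := t
  simp only [Admissible, admissibleBlock, Matrix.range_cons, Matrix.range_empty, Set.union_empty,
    Set.union_singleton, Set.union_insert, Set.mem_insert_iff, Set.mem_singleton_iff, Prod.ext_iff]
  omega

lemma admissibleBlock_injective (p q r : ℤ) : Function.Injective (admissibleBlock p q r) := by
  intro a b hab
  fin_cases a <;> fin_cases b <;> simp [admissibleBlock, Prod.ext_iff] at hab ⊢ <;> omega

variable {A : OddMat k} {t : ℤ × ℤ × ℤ × ℤ} {i j : Fin (2 * (k + 1) + 1)}

lemma setBlock_apply_of_lt_c0 (hj : j < c0 k) : setBlock A t i j = A i j := by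
  rw [Fin.lt_def, val_c0] at hj
  exact if_neg (by omega)

lemma setBlock_apply_of_c2_lt (hj : c2 k < j) : setBlock A t i j = A i j := by
  rw [Fin.lt_def, val_c2] at hj
  exact if_neg (by omega)

lemma setBlock_row_of_ne (h0 : i ≠ c0 k) (h1 : i ≠ c1 k) (h2 : i ≠ c2 k) :
    setBlock A t i = A i := by
  simp only [ne_eq, Fin.ext_iff, val_c0, val_c1, val_c2] at h0 h1 h2
  exact funext fun j => if_neg (by omega)

@[simp] lemma setBlock_c0_c0 : setBlock A t (c0 k) (c0 k) = t.1 := by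
  simp only [setBlock, val_c0]; split_ifs <;> omega
@[simp] lemma setBlock_c0_c1 : setBlock A t (c0 k) (c1 k) = t.2.1 := by
  simp only [setBlock, val_c0, val_c1]; split_ifs <;> omega
@[simp] lemma setBlock_c0_c2 : setBlock A t (c0 k) (c2 k) = t.2.2.1 := by
  simp only [setBlock, val_c0, val_c2]; split_ifs <;> omega
@[simp] lemma setBlock_c1_c0 : setBlock A t (c1 k) (c0 k) = t.2.1 := by
  simp only [setBlock, val_c0, val_c1]; split_ifs <;> omega
@[simp] lemma setBlock_c1_c1 : setBlock A t (c1 k) (c1 k) = t.2.2.2 := by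
  simp only [setBlock, val_c1]; split_ifs <;> omega
@[simp] lemma setBlock_c1_c2 : setBlock A t (c1 k) (c2 k) = t.2.1 := by
  simp only [setBlock, val_c1, val_c2]; split_ifs <;> omega
@[simp] lemma setBlock_c2_c0 : setBlock A t (c2 k) (c0 k) = t.2.2.1 := by
  simp only [setBlock, val_c0, val_c2]; split_ifs <;> omega
@[simp] lemma setBlock_c2_c1 : setBlock A t (c2 k) (c1 k) = t.2.1 := by
  simp only [setBlock, val_c1, val_c2]; split_ifs <;> omega
@[simp] lemma setBlock_c2_c2 : setBlock A t (c2 k) (c2 k) = t.1 := by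
  simp only [setBlock, val_c2]; split_ifs <;> omega

lemma setBlock_isSymm (hA : A.IsSymm) : (setBlock A t).IsSymm :=
  Matrix.IsSymm.ext fun i j => by
    simp only [setBlock]
    split_ifs <;> first | omega | exact hA.apply i j

lemma setBlock_apply_rev (hA : ∀ i j, A i j = A j.rev i.rev) (i j : Fin (2 * (k + 1) + 1)) :
    setBlock A t i j = setBlock A t j.rev i.rev := by
  have := i.isLt
  have := j.isLt
  simp only [setBlock, Fin.val_rev]
  split_ifs <;> first | omega | exact hA i j

lemma setBlock_setBlock (s : ℤ × ℤ × ℤ × ℤ) : setBlock (setBlock A s) t = setBlock A t := by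
  funext i j
  simp only [setBlock]
  split_ifs <;> rfl

lemma blockOf_setBlock : blockOf (setBlock A t) = t := by
  simp [blockOf]

lemma setBlock_injective (A : OddMat k) : Function.Injective (setBlock A) :=
  Function.LeftInverse.injective (g := blockOf) fun _ => blockOf_setBlock

lemma sum_Iio_c0_setBlock (i : Fin (2 * (k + 1) + 1)) :
    ∑ j ∈ Iio (c0 k), setBlock A t i j = ∑ j ∈ Iio (c0 k), A i j :=
  sum_congr rfl fun _ hj => setBlock_apply_of_lt_c0 (mem_Iio.1 hj)

lemma leftSum0_setBlock : leftSum0 (setBlock A t) = leftSum0 A := sum_Iio_c0_setBlock _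
lemma leftSum1_setBlock : leftSum1 (setBlock A t) = leftSum1 A := sum_Iio_c0_setBlock _
lemma rightSum0_setBlock : rightSum0 (setBlock A t) = rightSum0 A :=
  sum_congr rfl fun _ hj => setBlock_apply_of_c2_lt (mem_Ioi.1 hj)

lemma _root_.IsAsmLine.setBlock_row (hA : IsAsmLine (A i))
    (h₀ : ∑ j ∈ Iic (c0 k), setBlock A t i j = 0 ∨ ∑ j ∈ Iic (c0 k), setBlock A t i j = 1)
    (h₁ : ∑ j ∈ Iic (c1 k), setBlock A t i j = 0 ∨ ∑ j ∈ Iic (c1 k), setBlock A t i j = 1)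
    (h₂ : ∑ j ∈ Iic (c2 k), setBlock A t i j = ∑ j ∈ Iic (c2 k), A i j) :
    IsAsmLine (setBlock A t i) := by
  refine hA.of_eqOn_compl_Icc (fun j hj => setBlock_apply_of_lt_c0 hj)
    (fun j hj => setBlock_apply_of_c2_lt hj) ?_ h₂
  rw [Icc_c0_c2]
  simp only [mem_insert, mem_singleton]
  rintro _ (rfl | rfl | rfl)
  exacts [h₀, h₁, h₂ ▸ hA.1 _]

end CentralBlock

open CentralBlock

namespace IsDasasm
variable {k : ℕ} {A : OddMat k} (h : IsDasasm A)
include h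

lemma leftSum0_eq_zero_or_one : leftSum0 A = 0 ∨ leftSum0 A = 1 :=
  (h.1.isAsmLine_row _).sum_Iio _
lemma leftSum1_eq_zero_or_one : leftSum1 A = 0 ∨ leftSum1 A = 1 :=
  (h.1.isAsmLine_row _).sum_Iio _
lemma rightSum0_eq_zero_or_one : rightSum0 A = 0 ∨ rightSum0 A = 1 :=
  (h.1.isAsmLine_row _).sum_Ioi _

lemma sum_Ioi_c2_row_c1 : ∑ j ∈ Ioi (c2 k), A (c1 k) j = leftSum1 A := by
  have hpal := row_rev_eq_comp_rev h.isSymm h.apply_rev (c1 k)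
  rw [rev_c1] at hpal
  rw [sum_Ioi_eq_sum_Iio_rev, rev_c2, leftSum1]
  exact sum_congr rfl fun j _ => (congrFun hpal j).symm

lemma sum_Iic_c2_row_c0 : ∑ j ∈ Iic (c2 k), A (c0 k) j = 1 - rightSum0 A := by
  have := sum_Iic_add_sum_Ioi (A (c0 k)) (c2 k)
  rw [(h.1.isAsmLine_row _).2] at this
  unfold rightSum0
  omega

lemma sum_Iic_c2_row_c1 : ∑ j ∈ Iic (c2 k), A (c1 k) j = 1 - leftSum1 A := by
  have := sum_Iic_add_sum_Ioi (A (c1 k)) (c2 k)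
  rw [(h.1.isAsmLine_row _).2, h.sum_Ioi_c2_row_c1] at this
  omega

lemma admissible_blockOf : Admissible (leftSum0 A) (leftSum1 A) (rightSum0 A) (blockOf A) := by
  have r0 := (h.1.isAsmLine_row (c0 k)).1
  have f0 := (h.1.isAsmLine_row (c1 k)).1 (c0 k)
  have e0 := r0 (c0 k)
  have e1 := r0 (c1 k)
  have tot0 := h.sum_Iic_c2_row_c0
  have tot1 := h.sum_Iic_c2_row_c1
  have hy : A (c1 k) (c2 k) = A (c0 k) (c1 k) := by rw [h.apply_rev, rev_c1, rev_c2]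
  rw [sum_Iic_c0] at e0 f0
  rw [sum_Iic_c1] at e1
  rw [sum_Iic_c2] at tot0 tot1
  rw [h.isSymm.apply (c0 k) (c1 k)] at f0 tot1
  rw [hy] at tot1
  simp only [Admissible, blockOf]
  exact ⟨h.1.1 _ _, h.1.1 _ _, h.1.1 _ _, e0, e1, by unfold leftSum0; omega, f0,
    by unfold leftSum1 at tot1 ⊢; omega⟩

lemma setBlock_blockOf : setBlock A (blockOf A) = A := by
  have e10 : A (c1 k) (c0 k) = A (c0 k) (c1 k) := h.isSymm.apply _ _
  have e20 : A (c2 k) (c0 k) = A (c0 k) (c2 k) := h.isSymm.apply _ _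
  have e12 : A (c1 k) (c2 k) = A (c0 k) (c1 k) := by rw [h.apply_rev, rev_c1, rev_c2]
  have e21 : A (c2 k) (c1 k) = A (c0 k) (c1 k) := by rw [h.apply_rev, rev_c1, rev_c2, e10]
  have e22 : A (c2 k) (c2 k) = A (c0 k) (c0 k) := by rw [h.apply_rev, rev_c2]
  ext i j
  by_cases hblock : k ≤ (i : ℕ) ∧ (i : ℕ) ≤ k + 2 ∧ k ≤ (j : ℕ) ∧ (j : ℕ) ≤ k + 2
  · obtain ⟨hi₁, hi₂, hj₁, hj₂⟩ := hblock
    rcases eq_c0_or_eq_c1_or_eq_c2 hi₁ hi₂ with rfl | rfl | rfl <;>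
    rcases eq_c0_or_eq_c1_or_eq_c2 hj₁ hj₂ with rfl | rfl | rfl <;>
    simp [blockOf, e10, e20, e12, e21, e22]
  · exact if_neg hblock

lemma isAsmLine_setBlock_c0 {t : ℤ × ℤ × ℤ × ℤ}
    (ht : Admissible (leftSum0 A) (leftSum1 A) (rightSum0 A) t) :
    IsAsmLine (setBlock A t (c0 k)) := by
  obtain ⟨x, y, z, w⟩ := t
  obtain ⟨-, -, -, h₁, h₂, h₃, -, -⟩ := ht
  apply (h.1.isAsmLine_row _).setBlock_row
  · simpa only [sum_Iic_c0, sum_Iio_c0_setBlock, setBlock_c0_c0]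
  · simpa only [sum_Iic_c1, sum_Iio_c0_setBlock, setBlock_c0_c0, setBlock_c0_c1]
  · simp only [h.sum_Iic_c2_row_c0, sum_Iic_c2, sum_Iio_c0_setBlock, setBlock_c0_c0,
      setBlock_c0_c1, setBlock_c0_c2]
    unfold leftSum0 at h₃
    omega

lemma isAsmLine_setBlock_c1 {t : ℤ × ℤ × ℤ × ℤ}
    (ht : Admissible (leftSum0 A) (leftSum1 A) (rightSum0 A) t) :
    IsAsmLine (setBlock A t (c1 k)) := by
  obtain ⟨x, y, z, w⟩ := t
  obtain ⟨-, -, -, -, -, -, h₄, h₅⟩ := ht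
  unfold leftSum1 at h₄ h₅
  apply (h.1.isAsmLine_row _).setBlock_row
  · simpa only [sum_Iic_c0, sum_Iio_c0_setBlock, setBlock_c1_c0]
  · simp only [sum_Iic_c1, sum_Iio_c0_setBlock, setBlock_c1_c0, setBlock_c1_c1]
    omega
  · simp only [h.sum_Iic_c2_row_c1, sum_Iic_c2, sum_Iio_c0_setBlock, setBlock_c1_c0,
      setBlock_c1_c1, setBlock_c1_c2]
    unfold leftSum1
    omega

lemma isDasasm_setBlock {t : ℤ × ℤ × ℤ × ℤ}
    (ht : Admissible (leftSum0 A) (leftSum1 A) (rightSum0 A) t) : IsDasasm (setBlock A t) := by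
  have hBs : (setBlock A t).IsSymm := setBlock_isSymm h.isSymm
  have hBr := setBlock_apply_rev (t := t) h.apply_rev
  have hent (i j) : setBlock A t i j = -1 ∨ setBlock A t i j = 0 ∨ setBlock A t i j = 1 := by
    obtain ⟨x, y, z, w⟩ := t
    obtain ⟨hx, hy, hz, -, -, -, h₄, h₅⟩ := ht
    simp only [setBlock]
    split_ifs <;> first | omega | exact h.1.1 i j
  refine ⟨isAsm_of_isSymm hBs hent fun i => ?_, fun i j => ⟨(hBs.apply i j).symm, hBr i j⟩⟩
  by_cases hi0 : i = c0 k
  · exact hi0 ▸ h.isAsmLine_setBlock_c0 ht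
  by_cases hi1 : i = c1 k
  · exact hi1 ▸ h.isAsmLine_setBlock_c1 ht
  by_cases hi2 : i = c2 k
  · rw [hi2, ← rev_c0, row_rev_eq_comp_rev hBs hBr]
    exact (h.isAsmLine_setBlock_c0 ht).comp_rev
  · simpa only [setBlock_row_of_ne hi0 hi1 hi2] using h.1.isAsmLine_row i

lemma fiber_setBlock_zero_eq_range :
    {B ∈ dasasmSet (k + 1) | setBlock B 0 = setBlock A 0} =
      Set.range (setBlock A ∘ admissibleBlock (leftSum0 A) (leftSum1 A) (rightSum0 A)) := by
  have hrange (t : ℤ × ℤ × ℤ × ℤ) := admissible_iff_mem_range (t := t)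
    h.leftSum0_eq_zero_or_one h.leftSum1_eq_zero_or_one h.rightSum0_eq_zero_or_one
  ext B
  constructor
  · rintro ⟨hB, hBA⟩
    have hsame {f : OddMat k → ℤ} (hf : ∀ C t, f (setBlock C t) = f C) : f B = f A := by
      rw [← hf B 0, hBA, hf]
    have hadm := hB.admissible_blockOf
    rw [hsame fun _ _ => leftSum0_setBlock, hsame fun _ _ => leftSum1_setBlock,
      hsame fun _ _ => rightSum0_setBlock, hrange] at hadm
    obtain ⟨c, hc⟩ := hadm
    refine ⟨c, ?_⟩
    rw [Function.comp_apply, hc, ← setBlock_setBlock (A := A) 0, ← hBA, setBlock_setBlock,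
      hB.setBlock_blockOf]
  · rintro ⟨c, rfl⟩
    exact ⟨h.isDasasm_setBlock ((hrange _).2 ⟨c, rfl⟩), setBlock_setBlock _⟩

lemma ncard_fiber_setBlock_zero :
    {B ∈ dasasmSet (k + 1) | setBlock B 0 = setBlock A 0}.ncard = 3 := by
  rw [h.fiber_setBlock_zero_eq_range,
    Set.ncard_range_of_injective ((setBlock_injective A).comp (admissibleBlock_injective ..)),
    Nat.card_eq_fintype_card, Fintype.card_fin]

end IsDasasm

/-- For every integer `n ≥ 1`, the number of `(2n+1) × (2n+1)` DASASMs is divisible by `3`. -/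
theorem three_dvd_dasasm_count (n : ℕ) (hn : 1 ≤ n) : 3 ∣ (dasasmSet n).ncard := by
  obtain ⟨k, rfl⟩ : ∃ k, n = k + 1 := ⟨n - 1, by omega⟩
  classical
  have hfin : (dasasmSet (k + 1)).Finite := (setOf_isAsm_finite _).subset fun _ hA => hA.1
  rw [Set.ncard_eq_toFinset_card _ hfin, card_eq_sum_card_image (setBlock · 0)]
  refine dvd_sum fun _ hB => ?_
  obtain ⟨A, hA, rfl⟩ := mem_image.1 hB
  rw [← Set.ncard_coe_finset, coe_filter]
  simp only [Set.Finite.mem_toFinset] at hA ⊢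
  rw [IsDasasm.ncard_fiber_setBlock_zero hA]
end

section
/- Let λ be a partition and k an integer with k ≥ ℓ(λ). Then k · Σ_{T ∈ SSYT_λ(k)} #(k,T) = |λ| · |SSYT_λ(k)|, where #(k,T) denotes the number of cells of T whose entry equals k and |λ| is the number of cells of λ. -/
/-
For `v + 2 ≤ k` the Bender–Knuth involution maps `SSYT_λ(k)` to itself and exchanges the number
of entries `v + 1` with the number of entries `v + 2`. Hence `Σ_T #(j, T)` is the same for every
`j ∈ {1, …, k}`, and summing it over `j` counts every cell of every tableau once.
-/

/-- The set of semistandard Young tableaux of shape `μ` with entries from `{1, …, k}`. -/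
def ssytSet (μ : YoungDiagram) (k : ℕ) : Set (SemistandardYoungTableau μ) :=
  {T | ∀ i j, (i, j) ∈ μ → 1 ≤ T i j ∧ T i j ≤ k}

/-- The number of semistandard Young tableaux of shape `μ` with entries from `{1, …, k}`. -/
noncomputable def ssytCount (μ : YoungDiagram) (k : ℕ) : ℕ := (ssytSet μ k).ncard

open Finset

section RankIn

variable {α : Type*} [LinearOrder α] {s : Finset α} {a b : α}

def rankIn (s : Finset α) (a : α) : ℕ := #{b ∈ s | b < a}

lemma rankIn_lt_rankIn (ha : a ∈ s) (hab : a < b) : rankIn s a < rankIn s b :=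
  card_lt_card <| (ssubset_iff_of_subset (monotone_filter_right s fun _ _ h => h.trans hab)).2
    ⟨a, mem_filter.2 ⟨ha, hab⟩, by simp⟩

lemma rankIn_lt_card_filter_iff {p : α → Prop} [DecidablePred p]
    (hp : ∀ a ∈ s, ∀ b ∈ s, a ≤ b → p b → p a) (ha : a ∈ s) :
    rankIn s a < #{b ∈ s | p b} ↔ p a := by
  refine ⟨fun h => by_contra fun hpa => h.not_ge (card_le_card ?_),
    fun hpa => card_lt_card ?_⟩
  · exact monotone_filter_right s fun b hb hpb =>
      lt_of_not_ge fun hab => hpa (hp a ha b hb hab hpb)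
  · refine (ssubset_iff_of_subset ?_).2 ⟨a, mem_filter.2 ⟨ha, hpa⟩, by simp⟩
    exact monotone_filter_right s fun b hb hba => hp b hb a ha hba.le hpa

lemma rankIn_lt_card (ha : a ∈ s) : rankIn s a < #s := by
  simpa using rankIn_lt_card_filter_iff (p := fun _ => True) (by simp) ha

lemma card_filter_rankIn_lt (s : Finset α) (m : ℕ) : #{a ∈ s | rankIn s a < m} = min m #s := by
  have hinj : Set.InjOn (rankIn s) s :=
    StrictMonoOn.injOn fun a ha _ _ hab => rankIn_lt_rankIn ha hab
  have himage : s.image (rankIn s) = range #s :=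
    eq_of_subset_of_card_le (image_subset_iff.2 fun a ha => mem_range.2 (rankIn_lt_card ha))
      (by rw [card_range, card_image_of_injOn hinj])
  rw [← card_image_of_injOn (hinj.mono (filter_subset _ _)), ← filter_image (p := (· < m)),
    himage, ← card_range (min m #s)]
  congr 1
  ext i
  simp only [mem_filter, mem_range]
  omega

lemma card_filter_not_rankIn_lt (s : Finset α) (m : ℕ) :
    #{a ∈ s | ¬rankIn s a < m} = #s - m := by
  have := card_filter_add_card_filter_not (s := s) fun a => rankIn s a < m
  rw [card_filter_rankIn_lt] at this
  omega

end RankIn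

lemma YoungDiagram.card_filter_eq_sum_rows (μ : YoungDiagram) (P : ℕ × ℕ → Prop)
    [DecidablePred P] :
    #{p ∈ μ.cells | P p} =
      ∑ r ∈ range (μ.colLen 0), #{c ∈ range (μ.rowLen r) | P (r, c)} := by
  rw [card_eq_sum_card_fiberwise (f := Prod.fst) (t := range (μ.colLen 0))]
  · refine sum_congr rfl fun r _ =>
      Eq.trans ?_ (card_map ⟨(r, ·), Prod.mk_right_injective r⟩)
    congr 1
    ext ⟨i, j⟩
    simp only [mem_filter, mem_cells, mem_map, mem_range, ← mem_iff_lt_rowLen,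
      Function.Embedding.coeFn_mk, Prod.mk.injEq, exists_eq_right_right]
    aesop
  · intro p hp
    simp only [coe_filter, Set.mem_ofPred_eq, mem_cells] at hp
    exact mem_range.2 (mem_iff_lt_colLen.1 (μ.up_left_mem le_rfl (Nat.zero_le _) hp.1))

namespace SemistandardYoungTableau

variable {μ : YoungDiagram}

lemma mem_of_ne_zero (T : SemistandardYoungTableau μ) {i j : ℕ} (h : T i j ≠ 0) :
    (i, j) ∈ μ :=
  not_imp_comm.1 (fun hij => T.zeros hij) h

def entryCount (T : SemistandardYoungTableau μ) (j : ℕ) : ℕ :=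
  #{p ∈ μ.cells | T p.1 p.2 = j}

lemma sum_entryCount_Icc {k : ℕ} {T : SemistandardYoungTableau μ} (hT : T ∈ ssytSet μ k) :
    ∑ j ∈ Icc 1 k, T.entryCount j = μ.card :=
  (card_eq_sum_card_fiberwise fun p hp =>
    mem_Icc.2 (hT p.1 p.2 ((YoungDiagram.mem_cells p).1 hp))).symm

variable (T : SemistandardYoungTableau μ) (v : ℕ) {r c : ℕ}

/-- A cell carrying `v + 1` or `v + 2` is free unless it lies in a vertical domino `v + 1` over
`v + 2`. For `r = 0`, `T (r - 1) c` is `T 0 c = v + 2`, so the second clause holds as it should. -/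
def IsFree (r c : ℕ) : Prop :=
  (T r c = v + 1 ∧ T (r + 1) c ≠ v + 2) ∨ (T r c = v + 2 ∧ T (r - 1) c ≠ v + 1)

instance (r c : ℕ) : Decidable (T.IsFree v r c) := by unfold IsFree; infer_instance

def freeCols (r : ℕ) : Finset ℕ := {c ∈ range (μ.rowLen r) | T.IsFree v r c}

/-- The free entries of row `r`, `a` copies of `v + 1` followed by `b` copies of `v + 2`, are
replaced by `b` copies of `v + 1` followed by `a` copies of `v + 2`. -/
def bkEntry (r c : ℕ) : ℕ :=
  if T.IsFree v r c then
    if rankIn (T.freeCols v r) c < #{c' ∈ T.freeCols v r | T r c' = v + 2} then v + 1 else v + 2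
  else T r c

variable {T v}

lemma IsFree.entry_eq_or (h : T.IsFree v r c) : T r c = v + 1 ∨ T r c = v + 2 :=
  h.imp And.left And.left

lemma IsFree.mem (h : T.IsFree v r c) : (r, c) ∈ μ :=
  T.mem_of_ne_zero (by rcases h.entry_eq_or with h | h <;> omega)

lemma mem_freeCols : c ∈ T.freeCols v r ↔ T.IsFree v r c :=
  ⟨fun h => (mem_filter.1 h).2,
    fun h => mem_filter.2 ⟨mem_range.2 (YoungDiagram.mem_iff_lt_rowLen.1 h.mem), h⟩⟩

lemma IsFree.entry_above_le (h : T.IsFree v (r + 1) c) : T r c ≤ v := by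
  have := T.col_strict (Nat.lt_add_one r) h.mem
  rcases h with ⟨_, _⟩ | ⟨_, hne⟩
  · omega
  · rw [Nat.add_sub_cancel] at hne
    omega

lemma IsFree.lt_entry_below (h : T.IsFree v r c) (hmem : (r + 1, c) ∈ μ) :
    v + 2 < T (r + 1) c := by
  have := T.col_strict (Nat.lt_add_one r) hmem
  rcases h with ⟨_, _⟩ | ⟨_, _⟩ <;> omega

lemma entry_below_of_not_isFree (h : ¬T.IsFree v r c) (hv : T r c = v + 1) :
    T (r + 1) c = v + 2 :=
  by_contra fun hne => h (Or.inl ⟨hv, hne⟩)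

lemma entry_above_of_not_isFree (h : ¬T.IsFree v r c) (hv : T r c = v + 2) :
    ∃ s, r = s + 1 ∧ T s c = v + 1 := by
  have habove : T (r - 1) c = v + 1 := by_contra fun hne => h (Or.inr ⟨hv, hne⟩)
  cases r with
  | zero => simp only [Nat.zero_sub] at habove; omega
  | succ s => exact ⟨s, rfl, habove⟩

lemma not_isFree_of_vertical_pair (h1 : T r c = v + 1) (h2 : T (r + 1) c = v + 2) :
    ¬T.IsFree v r c ∧ ¬T.IsFree v (r + 1) c := by
  refine ⟨?_, ?_⟩ <;> rintro (⟨_, h⟩ | ⟨_, h⟩) <;> simp_all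

lemma eq_succ_of_le_of_mem_freeCols (hc : c ∈ T.freeCols v r) {c' : ℕ}
    (hc' : c' ∈ T.freeCols v r) (hle : c ≤ c') (hv : T r c' = v + 1) : T r c = v + 1 := by
  have := T.row_weak_of_le hle (mem_freeCols.1 hc').mem
  rcases (mem_freeCols.1 hc).entry_eq_or with h | h <;> omega

lemma bkEntry_of_not_isFree (h : ¬T.IsFree v r c) : T.bkEntry v r c = T r c := if_neg h

lemma bkEntry_of_entry_ne (h1 : T r c ≠ v + 1) (h2 : T r c ≠ v + 2) : T.bkEntry v r c = T r c :=
  bkEntry_of_not_isFree fun h => h.entry_eq_or.elim h1 h2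

lemma IsFree.bkEntry_eq_or (h : T.IsFree v r c) :
    T.bkEntry v r c = v + 1 ∨ T.bkEntry v r c = v + 2 := by
  rw [bkEntry, if_pos h]
  split_ifs <;> simp

lemma bkEntry_row_weak {i j1 j2 : ℕ} (hj : j1 < j2) (hmem : (i, j2) ∈ μ) :
    T.bkEntry v i j1 ≤ T.bkEntry v i j2 := by
  have hle := T.row_weak hj hmem
  by_cases h1 : T.IsFree v i j1 <;> by_cases h2 : T.IsFree v i j2
  · have := rankIn_lt_rankIn (mem_freeCols.2 h1) hj
    simp only [bkEntry, if_pos h1, if_pos h2]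
    split_ifs <;> omega
  · rw [bkEntry_of_not_isFree h2]
    suffices v + 2 ≤ T i j2 by rcases h1.bkEntry_eq_or with h | h <;> omega
    -- otherwise `(i, j2)` tops a domino, yet the cell below the free `(i, j1)` exceeds `v + 2`
    by_contra hlt
    have hv : T i j2 = v + 1 := by rcases h1.entry_eq_or with h | h <;> omega
    have hbelow := entry_below_of_not_isFree h2 hv
    have hmem' : (i + 1, j2) ∈ μ := T.mem_of_ne_zero (by omega)
    have := h1.lt_entry_below (μ.up_left_mem le_rfl hj.le hmem')
    have := T.row_weak hj hmem'
    omega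
  · rw [bkEntry_of_not_isFree h1]
    suffices T i j1 ≤ v + 1 by rcases h2.bkEntry_eq_or with h | h <;> omega
    -- otherwise `(i, j1)` ends a domino, yet the cell above the free `(i, j2)` is at most `v`
    by_contra hlt
    obtain ⟨s, rfl, habove⟩ :=
      entry_above_of_not_isFree h1 (by rcases h2.entry_eq_or with h | h <;> omega)
    have := h2.entry_above_le
    have := T.row_weak hj (μ.up_left_mem s.le_succ le_rfl hmem)
    omega
  · rw [bkEntry_of_not_isFree h1, bkEntry_of_not_isFree h2]
    exact hle

lemma bkEntry_lt_bkEntry_succ {i j : ℕ} (hmem : (i + 1, j) ∈ μ) :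
    T.bkEntry v i j < T.bkEntry v (i + 1) j := by
  have hlt := T.col_strict (Nat.lt_add_one i) hmem
  by_cases h1 : T.IsFree v i j
  · have := h1.lt_entry_below hmem
    rw [bkEntry_of_entry_ne (r := i + 1) (by omega) (by omega)]
    rcases h1.bkEntry_eq_or with h | h <;> omega
  · rw [bkEntry_of_not_isFree h1]
    by_cases h2 : T.IsFree v (i + 1) j
    · have := h2.entry_above_le
      rcases h2.bkEntry_eq_or with h | h <;> omega
    · rw [bkEntry_of_not_isFree h2]
      exact hlt

lemma bkEntry_col_strict {i1 i2 j : ℕ} (hi : i1 < i2) (hmem : (i2, j) ∈ μ) :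
    T.bkEntry v i1 j < T.bkEntry v i2 j := by
  induction i2 with
  | zero => omega
  | succ n ih =>
    rcases Nat.lt_succ_iff_lt_or_eq.1 hi with h | rfl
    · exact (ih h (μ.up_left_mem n.le_succ le_rfl hmem)).trans (bkEntry_lt_bkEntry_succ hmem)
    · exact bkEntry_lt_bkEntry_succ hmem

lemma bkEntry_zeros {i j : ℕ} (h : (i, j) ∉ μ) : T.bkEntry v i j = 0 := by
  rw [bkEntry_of_not_isFree fun hf => h hf.mem, T.zeros h]

variable (T v)

def benderKnuth : SemistandardYoungTableau μ where
  entry := T.bkEntry v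
  row_weak' := bkEntry_row_weak
  col_strict' := bkEntry_col_strict
  zeros' := bkEntry_zeros

lemma benderKnuth_apply (i j : ℕ) : T.benderKnuth v i j = T.bkEntry v i j := rfl

variable {T v}

lemma IsFree.benderKnuth (h : T.IsFree v r c) : (T.benderKnuth v).IsFree v r c := by
  rcases h.bkEntry_eq_or with hval | hval
  · have hbelow : T (r + 1) c ≠ v + 1 ∧ T (r + 1) c ≠ v + 2 := by
      by_cases hmem : (r + 1, c) ∈ μ
      · have := h.lt_entry_below hmem
        omega
      · rw [T.zeros hmem]
        omega
    refine Or.inl ⟨hval, ?_⟩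
    rw [benderKnuth_apply, bkEntry_of_entry_ne hbelow.1 hbelow.2]
    exact hbelow.2
  · refine Or.inr ⟨hval, ?_⟩
    cases r with
    | zero => simp only [Nat.zero_sub, benderKnuth_apply, hval]; omega
    | succ s =>
      have := h.entry_above_le
      rw [Nat.add_sub_cancel, benderKnuth_apply, bkEntry_of_entry_ne (by omega) (by omega)]
      omega

lemma benderKnuth_vertical_pair (h1 : T r c = v + 1) (h2 : T (r + 1) c = v + 2) :
    T.benderKnuth v r c = v + 1 ∧ T.benderKnuth v (r + 1) c = v + 2 := by
  obtain ⟨hr, hr'⟩ := not_isFree_of_vertical_pair h1 h2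
  rw [benderKnuth_apply, benderKnuth_apply, bkEntry_of_not_isFree hr, bkEntry_of_not_isFree hr']
  exact ⟨h1, h2⟩

lemma not_isFree_benderKnuth (h : ¬T.IsFree v r c) : ¬(T.benderKnuth v).IsFree v r c := by
  by_cases h1 : T r c = v + 1
  · obtain ⟨h1', h2'⟩ := benderKnuth_vertical_pair h1 (entry_below_of_not_isFree h h1)
    exact (not_isFree_of_vertical_pair h1' h2').1
  by_cases h2 : T r c = v + 2
  · obtain ⟨s, rfl, habove⟩ := entry_above_of_not_isFree h h2
    obtain ⟨h1', h2'⟩ := benderKnuth_vertical_pair habove h2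
    exact (not_isFree_of_vertical_pair h1' h2').2
  · intro hf
    have := hf.entry_eq_or
    rw [benderKnuth_apply, bkEntry_of_entry_ne h1 h2] at this
    exact this.elim h1 h2

lemma isFree_benderKnuth_iff : (T.benderKnuth v).IsFree v r c ↔ T.IsFree v r c :=
  ⟨not_imp_not.1 not_isFree_benderKnuth, IsFree.benderKnuth⟩

lemma freeCols_benderKnuth : (T.benderKnuth v).freeCols v r = T.freeCols v r := by
  ext c
  rw [mem_freeCols, mem_freeCols, isFree_benderKnuth_iff]

lemma card_freeCols_benderKnuth :
    #{c ∈ T.freeCols v r | T.benderKnuth v r c = v + 2} =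
      #{c ∈ T.freeCols v r | T r c = v + 1} := by
  have hsplit : #{c ∈ T.freeCols v r | T r c = v + 1} + #{c ∈ T.freeCols v r | T r c = v + 2} =
      #(T.freeCols v r) := by
    rw [← card_filter_add_card_filter_not (s := T.freeCols v r) (fun c => T r c = v + 1)]
    congr 2
    refine filter_congr fun c hc => ?_
    rcases (mem_freeCols.1 hc).entry_eq_or with h | h <;> simp [h]
  calc #{c ∈ T.freeCols v r | T.benderKnuth v r c = v + 2}
      = #{c ∈ T.freeCols v r |
          ¬rankIn (T.freeCols v r) c < #{c' ∈ T.freeCols v r | T r c' = v + 2}} := by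
        congr 1
        refine filter_congr fun c hc => ?_
        rw [benderKnuth_apply, bkEntry, if_pos (mem_freeCols.1 hc)]
        split_ifs <;> simp_all
    _ = #{c ∈ T.freeCols v r | T r c = v + 1} := by
        rw [card_filter_not_rankIn_lt]
        omega

lemma benderKnuth_benderKnuth : (T.benderKnuth v).benderKnuth v = T := by
  ext i j
  by_cases h : T.IsFree v i j
  · have key := rankIn_lt_card_filter_iff (p := fun c => T i c = v + 1)
      (fun _ ha _ hb => eq_succ_of_le_of_mem_freeCols ha hb) (mem_freeCols.2 h)
    rw [benderKnuth_apply, bkEntry, if_pos (isFree_benderKnuth_iff.2 h), freeCols_benderKnuth,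
      card_freeCols_benderKnuth]
    rcases h.entry_eq_or with hv | hv <;> simp [key, hv]
  · rw [benderKnuth_apply, bkEntry_of_not_isFree (not_isFree_benderKnuth h), benderKnuth_apply,
      bkEntry_of_not_isFree h]

variable (T v)

lemma card_not_isFree_entry_succ_eq_add_two :
    #{p ∈ μ.cells | ¬T.IsFree v p.1 p.2 ∧ T p.1 p.2 = v + 1} =
      #{p ∈ μ.cells | ¬T.IsFree v p.1 p.2 ∧ T p.1 p.2 = v + 2} := by
  refine card_nbij (fun p => (p.1 + 1, p.2)) ?_ ?_ ?_
  · rintro ⟨r, c⟩ hp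
    simp only [coe_filter, Set.mem_ofPred_eq, YoungDiagram.mem_cells] at hp ⊢
    have hbelow := entry_below_of_not_isFree hp.2.1 hp.2.2
    exact ⟨T.mem_of_ne_zero (by omega), (not_isFree_of_vertical_pair hp.2.2 hbelow).2, hbelow⟩
  · rintro ⟨_, _⟩ _ ⟨_, _⟩ _ h
    simp_all
  · rintro ⟨r, c⟩ hp
    simp only [coe_filter, Set.mem_ofPred_eq, YoungDiagram.mem_cells] at hp
    obtain ⟨s, rfl, habove⟩ := entry_above_of_not_isFree hp.2.1 hp.2.2
    refine ⟨(s, c), ?_, rfl⟩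
    simp only [coe_filter, Set.mem_ofPred_eq, YoungDiagram.mem_cells]
    exact ⟨μ.up_left_mem s.le_succ le_rfl hp.1, (not_isFree_of_vertical_pair habove hp.2.2).1,
      habove⟩

lemma entryCount_benderKnuth : (T.benderKnuth v).entryCount (v + 2) = T.entryCount (v + 1) := by
  have hsplit : ∀ (S : SemistandardYoungTableau μ) (j : ℕ), S.entryCount j =
      #{p ∈ μ.cells | T.IsFree v p.1 p.2 ∧ S p.1 p.2 = j} +
        #{p ∈ μ.cells | ¬T.IsFree v p.1 p.2 ∧ S p.1 p.2 = j} := fun S j => by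
    rw [entryCount, ← card_filter_add_card_filter_not (fun p => T.IsFree v p.1 p.2),
      filter_filter, filter_filter]
    simp only [and_comm]
  rw [hsplit (T.benderKnuth v), hsplit T]
  congr 1
  · rw [μ.card_filter_eq_sum_rows, μ.card_filter_eq_sum_rows]
    refine sum_congr rfl fun r _ => ?_
    simpa only [freeCols, filter_filter] using card_freeCols_benderKnuth (T := T) (v := v) (r := r)
  · rw [card_not_isFree_entry_succ_eq_add_two]
    congr 1
    refine filter_congr fun p _ => and_congr_right fun h => ?_
    rw [benderKnuth_apply, bkEntry_of_not_isFree h]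

lemma benderKnuth_mem_ssytSet {k : ℕ} (hv : v + 2 ≤ k) (hT : T ∈ ssytSet μ k) :
    T.benderKnuth v ∈ ssytSet μ k := by
  intro i j hmem
  by_cases h : T.IsFree v i j
  · rcases h.bkEntry_eq_or with h' | h' <;> rw [benderKnuth_apply, h'] <;> omega
  · rw [benderKnuth_apply, bkEntry_of_not_isFree h]
    exact hT i j hmem

end SemistandardYoungTableau

open SemistandardYoungTableau

lemma ssytSet_finite (μ : YoungDiagram) (k : ℕ) : (ssytSet μ k).Finite := by
  let f : SemistandardYoungTableau μ → μ.cells → ℕ := fun T c => T c.1.1 c.1.2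
  have hf : f.Injective := fun T T' h => ext fun i j => by
    by_cases hm : (i, j) ∈ μ
    · exact congrFun h ⟨(i, j), (YoungDiagram.mem_cells _).2 hm⟩
    · rw [T.zeros hm, T'.zeros hm]
  refine ((Set.Finite.pi fun _ => Set.finite_Iic k).preimage hf.injOn).subset ?_
  intro T hT c _
  exact (hT _ _ ((YoungDiagram.mem_cells _).1 c.2)).2

lemma finsum_entryCount_succ {μ : YoungDiagram} {k v : ℕ} (hv : v + 2 ≤ k) :
    ∑ᶠ T ∈ ssytSet μ k, T.entryCount (v + 1) =
      ∑ᶠ T ∈ ssytSet μ k, T.entryCount (v + 2) := by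
  have hmaps : Set.MapsTo (benderKnuth · v) (ssytSet μ k) (ssytSet μ k) :=
    fun T hT => T.benderKnuth_mem_ssytSet v hv hT
  refine finsum_mem_eq_of_bijOn (benderKnuth · v) (Set.InvOn.bijOn ?_ hmaps hmaps) fun T _ => ?_
  · exact ⟨fun T _ => benderKnuth_benderKnuth, fun T _ => benderKnuth_benderKnuth⟩
  · exact (T.entryCount_benderKnuth v).symm

lemma finsum_entryCount_eq_of_le {μ : YoungDiagram} {j k : ℕ} (hj : 1 ≤ j) (hjk : j ≤ k) :
    ∑ᶠ T ∈ ssytSet μ k, T.entryCount j = ∑ᶠ T ∈ ssytSet μ k, T.entryCount k := by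
  suffices ∀ n, j ≤ n → n ≤ k →
      ∑ᶠ T ∈ ssytSet μ k, T.entryCount j = ∑ᶠ T ∈ ssytSet μ k, T.entryCount n from
    this k hjk le_rfl
  intro n hn
  induction n, hn using Nat.le_induction with
  | base => exact fun _ => rfl
  | succ n hjn ih =>
    intro hnk
    obtain ⟨v, rfl⟩ : ∃ v, n = v + 1 := ⟨n - 1, by omega⟩
    rw [ih (by omega), finsum_entryCount_succ (by omega)]

theorem ssyt_max_entry_count_general (μ : YoungDiagram) (k : ℕ) :
    k * (∑ᶠ T ∈ ssytSet μ k, (μ.cells.filter fun c => T c.1 c.2 = k).card) =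
      μ.card * ssytCount μ k := by
  have hfin := ssytSet_finite μ k
  calc k * ∑ᶠ T ∈ ssytSet μ k, T.entryCount k
      = ∑ j ∈ Icc 1 k, ∑ᶠ T ∈ ssytSet μ k, T.entryCount j := by
        rw [sum_congr rfl fun j hj => finsum_entryCount_eq_of_le (mem_Icc.1 hj).1
          (mem_Icc.1 hj).2, sum_const, Nat.card_Icc, smul_eq_mul, Nat.add_sub_cancel]
    _ = ∑ T ∈ hfin.toFinset, ∑ j ∈ Icc 1 k, T.entryCount j := by
        simp_rw [finsum_mem_eq_finite_toFinset_sum _ hfin]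
        exact sum_comm
    _ = ∑ T ∈ hfin.toFinset, μ.card :=
        sum_congr rfl fun T hT => sum_entryCount_Icc (hfin.mem_toFinset.1 hT)
    _ = μ.card * ssytCount μ k := by
        rw [sum_const, smul_eq_mul, mul_comm, ssytCount, Set.ncard_eq_toFinset_card _ hfin]

/-- For a partition (Young diagram) `μ` with at most `k` rows,
`k · Σ_{T ∈ SSYT_μ(k)} #(k, T) = |μ| · |SSYT_μ(k)|`, where `#(k, T)` is the number of
cells of `T` whose entry equals `k`. -/
theorem ssyt_max_entry_count (μ : YoungDiagram) (k : ℕ) (hk : μ.colLen 0 ≤ k) :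
    k * (∑ᶠ T ∈ ssytSet μ k, (μ.cells.filter fun c => T c.1 c.2 = k).card) =
      μ.card * ssytCount μ k :=
  ssyt_max_entry_count_general μ k
end

section
/- For every positive integer n, the number of semistandard Young tableaux of shape (n, n, n−1, n−1, …, 2, 2, 1, 1) with entries from {1,…,2n+1} equals the number of semistandard Young tableaux of shape (n, n−1, n−1, …, 2, 2, 1, 1) with entries from {1,…,2n+1}. -/
/-- The Young diagram of the partition `(n, n-1, n-1, ..., 2, 2, 1, 1)` (of length `2n-1`,
with first part `n` and with parts `2j` and `2j+1` both equal to `n-j` for `j = 1, …, n-1`):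
row `i` (0-based) has length `n - (i+1)/2`. -/
def lambdaShape (n : ℕ) : YoungDiagram where
  cells := (Finset.range (2*n) ×ˢ Finset.range n).filter fun p => p.2 < n - (p.1 + 1) / 2
  isLowerSet := by
    intro a b hba ha
    have h1 : b.1 ≤ a.1 := (Prod.le_def.mp hba).1
    have h2 : b.2 ≤ a.2 := (Prod.le_def.mp hba).2
    simp only [Finset.mem_coe, Finset.mem_filter, Finset.mem_product, Finset.mem_range] at ha ⊢
    have hd : (b.1 + 1) / 2 ≤ (a.1 + 1) / 2 := Nat.div_le_div_right (by omega)
    omega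
/-- The Young diagram of the partition `(n, n, n-1, n-1, ..., 2, 2, 1, 1)` (of length `2n`,
with parts `2j-1` and `2j` both equal to `n+1-j` for `j = 1, …, n`):
row `i` (0-based) has length `n - i/2`. -/
def muShape (n : ℕ) : YoungDiagram where
  cells := (Finset.range (2*n) ×ˢ Finset.range n).filter fun p => p.2 < n - p.1 / 2
  isLowerSet := by
    intro a b hba ha
    have h1 : b.1 ≤ a.1 := (Prod.le_def.mp hba).1
    have h2 : b.2 ≤ a.2 := (Prod.le_def.mp hba).2
    simp only [Finset.mem_coe, Finset.mem_filter, Finset.mem_product, Finset.mem_range] at ha ⊢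
    have hd : b.1 / 2 ≤ a.1 / 2 := Nat.div_le_div_right h1
    omega

/-!
Record a semistandard tableau `T` of shape `μ` with entries in `{1, …, N}` by its Gelfand–Tsetlin
pattern: `g k i` is the number of entries `≤ k` in row `i`, so `g k` is the shape of the
subtableau of entries `≤ k`. These patterns are characterised by interlacing inequalities, and
these are preserved when, at every level `k ≤ N`, the shape `g k` (at most `k` rows) is replaced by
its complement in the `k × m` box rotated by 180°. If `ν` is the rotated complement of `μ` in the
`N × m` box, this gives a bijection between the tableaux of shapes `μ` and `ν`. Within the
`(2n+1) × n` box the two staircase shapes are exactly such complements of each other.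
-/

open Finset

structure IsGTPattern (μ : YoungDiagram) (N : ℕ) (g : ℕ → ℕ → ℕ) : Prop where
  apply_zero : ∀ i, g 0 i = 0
  le_succ : ∀ k i, g k i ≤ g (k + 1) i
  succ_succ_le : ∀ k i, g (k + 1) (i + 1) ≤ g k i
  eq_rowLen : ∀ k i, N ≤ k → g k i = μ.rowLen i

namespace IsGTPattern

variable {μ : YoungDiagram} {N : ℕ} {g : ℕ → ℕ → ℕ}

lemma mono (hg : IsGTPattern μ N g) {k k' : ℕ} (hk : k ≤ k') (i : ℕ) : g k i ≤ g k' i := by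
  induction k', hk using Nat.le_induction with
  | base => exact le_rfl
  | succ k' _ ih => exact ih.trans (hg.le_succ k' i)

lemma add_add_le (hg : IsGTPattern μ N g) (d k i : ℕ) : g (k + d) (i + d) ≤ g k i := by
  induction d with
  | zero => exact le_rfl
  | succ d ih => exact (hg.succ_succ_le (k + d) (i + d)).trans ih

lemma eq_zero_of_le (hg : IsGTPattern μ N g) {k i : ℕ} (hki : k ≤ i) : g k i = 0 := by
  have h := hg.add_add_le k 0 (i - k)
  rw [zero_add, Nat.sub_add_cancel hki, hg.apply_zero] at h
  omega

lemma le_rowLen (hg : IsGTPattern μ N g) (k i : ℕ) : g k i ≤ μ.rowLen i :=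
  (hg.mono (le_max_left k N) i).trans (hg.eq_rowLen _ i (le_max_right k N)).le

lemma apply_min (hg : IsGTPattern μ N g) (k i : ℕ) : g (min k N) i = g k i := by
  rcases le_total k N with hk | hk
  · rw [min_eq_left hk]
  · rw [min_eq_right hk, hg.eq_rowLen N i le_rfl, hg.eq_rowLen k i hk]

lemma exists_lt (hg : IsGTPattern μ N g) {i j : ℕ} (hij : (i, j) ∈ μ) : ∃ k, j < g k i :=
  ⟨N, by rw [hg.eq_rowLen N i le_rfl]; exact YoungDiagram.mem_iff_lt_rowLen.mp hij⟩

end IsGTPattern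

section TableauToPattern

variable {μ : YoungDiagram} {N : ℕ}

def SemistandardYoungTableau.gtPattern (T : SemistandardYoungTableau μ) : ℕ → ℕ → ℕ :=
  fun k i => #{j ∈ range (μ.rowLen i) | T i j ≤ k}

open SemistandardYoungTableau

lemma isGTPattern_gtPattern {T : SemistandardYoungTableau μ} (hT : T ∈ ssytSet μ N) :
    IsGTPattern μ N T.gtPattern where
  apply_zero i := by
    refine card_eq_zero.mpr (filter_eq_empty_iff.mpr fun j hj => ?_)
    have := (hT i j (YoungDiagram.mem_iff_lt_rowLen.mpr (mem_range.mp hj))).1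
    omega
  le_succ k i := card_le_card fun j hj => by
    simp only [mem_filter] at hj ⊢
    exact ⟨hj.1, hj.2.trans k.le_succ⟩
  succ_succ_le k i := card_le_card fun j hj => by
    simp only [mem_filter, mem_range] at hj ⊢
    have hmem : (i + 1, j) ∈ μ := YoungDiagram.mem_iff_lt_rowLen.mpr hj.1
    have hlt : T i j < T (i + 1) j := T.col_strict i.lt_succ_self hmem
    exact ⟨hj.1.trans_le (μ.rowLen_anti i (i + 1) i.le_succ), by omega⟩
  eq_rowLen k i hk := by
    rw [gtPattern, filter_true_of_mem, card_range]
    intro j hj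
    exact (hT i j (YoungDiagram.mem_iff_lt_rowLen.mpr (mem_range.mp hj))).2.trans hk

lemma lt_gtPattern_iff (T : SemistandardYoungTableau μ) {i j : ℕ} (hij : (i, j) ∈ μ) (k : ℕ) :
    j < T.gtPattern k i ↔ T i j ≤ k := by
  constructor
  · intro h
    by_contra! hk
    have hsub : {j' ∈ range (μ.rowLen i) | T i j' ≤ k} ⊆ range j := fun j' hj' => by
      simp only [mem_filter, mem_range] at hj' ⊢
      by_contra! hjj'
      have := T.row_weak_of_le hjj' (YoungDiagram.mem_iff_lt_rowLen.mpr hj'.1)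
      omega
    have := card_le_card hsub
    rw [card_range] at this
    exact (h.trans_le this).false
  · intro h
    have hsub : range (j + 1) ⊆ {j' ∈ range (μ.rowLen i) | T i j' ≤ k} := fun j' hj' => by
      rw [mem_range] at hj'
      rw [mem_filter, mem_range, ← YoungDiagram.mem_iff_lt_rowLen]
      exact ⟨μ.up_left_mem le_rfl (by omega) hij,
        (T.row_weak_of_le (by omega) hij).trans h⟩
    have := card_le_card hsub
    rwa [card_range] at this

lemma gtPattern_injective : Function.Injective (gtPattern (μ := μ)) := by
  intro T T' h
  ext i j
  by_cases hij : (i, j) ∈ μ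
  · have hle : ∀ k, T i j ≤ k ↔ T' i j ≤ k := fun k => by
      rw [← lt_gtPattern_iff T hij, h, lt_gtPattern_iff T' hij]
    exact le_antisymm ((hle _).mpr le_rfl) ((hle _).mp le_rfl)
  · rw [T.zeros hij, T'.zeros hij]

end TableauToPattern

section PatternToTableau

variable {μ : YoungDiagram} {N : ℕ} {g : ℕ → ℕ → ℕ}

noncomputable def IsGTPattern.entry (hg : IsGTPattern μ N g) (i j : ℕ) : ℕ :=
  if h : (i, j) ∈ μ then Nat.find (hg.exists_lt h) else 0

lemma IsGTPattern.entry_le_iff (hg : IsGTPattern μ N g) {i j : ℕ} (hij : (i, j) ∈ μ) (k : ℕ) :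
    hg.entry i j ≤ k ↔ j < g k i := by
  rw [IsGTPattern.entry, dif_pos hij, Nat.find_le_iff]
  exact ⟨fun ⟨k', hk', hj⟩ => hj.trans_le (hg.mono hk' i), fun hj => ⟨k, le_rfl, hj⟩⟩

noncomputable def IsGTPattern.toTableau (hg : IsGTPattern μ N g) :
    SemistandardYoungTableau μ where
  entry := hg.entry
  row_weak' {i j₁ j₂} hj hcell := by
    rw [hg.entry_le_iff (μ.up_left_mem le_rfl hj.le hcell)]
    exact hj.trans ((hg.entry_le_iff hcell _).mp le_rfl)
  col_strict' {i₁ i₂ j} hi hcell := by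
    set k := hg.entry i₂ j
    have hj : j < g k i₂ := (hg.entry_le_iff hcell k).mp le_rfl
    have hk : i₂ < k := by
      by_contra! hk
      rw [hg.eq_zero_of_le hk] at hj
      exact j.not_lt_zero hj
    -- the interlacing inequalities move the cell up `i₂ - i₁` rows at the cost of as many levels
    have hshift := hg.add_add_le (i₂ - i₁) (k - (i₂ - i₁)) i₁
    rw [Nat.sub_add_cancel (by omega), Nat.add_sub_cancel' hi.le] at hshift
    have := (hg.entry_le_iff (μ.up_left_mem hi.le le_rfl hcell) _).mpr (hj.trans_le hshift)
    omega
  zeros' {i j} h := by rw [IsGTPattern.entry, dif_neg h]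

lemma IsGTPattern.toTableau_apply (hg : IsGTPattern μ N g) (i j : ℕ) :
    hg.toTableau i j = hg.entry i j := rfl

lemma IsGTPattern.toTableau_mem_ssytSet (hg : IsGTPattern μ N g) :
    hg.toTableau ∈ ssytSet μ N := by
  intro i j hij
  rw [hg.toTableau_apply, Nat.one_le_iff_ne_zero, hg.entry_le_iff hij, Ne,
    ← Nat.le_zero, hg.entry_le_iff hij, hg.apply_zero, hg.eq_rowLen N i le_rfl]
  exact ⟨Nat.not_lt_zero j, YoungDiagram.mem_iff_lt_rowLen.mp hij⟩

lemma IsGTPattern.gtPattern_toTableau (hg : IsGTPattern μ N g) : hg.toTableau.gtPattern = g := by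
  funext k i
  have hfilter : {j ∈ range (μ.rowLen i) | hg.toTableau i j ≤ k} = range (g k i) := by
    ext j
    simp only [mem_filter, mem_range]
    constructor
    · rintro ⟨hj, hle⟩
      exact (hg.entry_le_iff (YoungDiagram.mem_iff_lt_rowLen.mpr hj) k).mp hle
    · intro hj
      have hj' := hj.trans_le (hg.le_rowLen k i)
      exact ⟨hj', (hg.entry_le_iff (YoungDiagram.mem_iff_lt_rowLen.mpr hj') k).mpr hj⟩
  rw [SemistandardYoungTableau.gtPattern, hfilter, card_range]

end PatternToTableau

lemma ssytCount_eq_ncard_isGTPattern (μ : YoungDiagram) (N : ℕ) :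
    ssytCount μ N = {g | IsGTPattern μ N g}.ncard := by
  have hbij : Set.BijOn SemistandardYoungTableau.gtPattern (ssytSet μ N)
      {g | IsGTPattern μ N g} :=
    ⟨fun _ hT => isGTPattern_gtPattern hT, gtPattern_injective.injOn,
      fun g hg => ⟨_, IsGTPattern.toTableau_mem_ssytSet hg, hg.gtPattern_toTableau⟩⟩
  rw [ssytCount, ← hbij.image_eq, Set.ncard_image_of_injective _ gtPattern_injective]

section Complement

variable {μ ν : YoungDiagram} {N m : ℕ} {g : ℕ → ℕ → ℕ}

def gtComplement (m N : ℕ) (g : ℕ → ℕ → ℕ) : ℕ → ℕ → ℕ :=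
  fun k i => if i < min k N then m - g (min k N) (min k N - 1 - i) else 0

lemma gtComplement_of_le (g : ℕ → ℕ → ℕ) {k : ℕ} (hk : k ≤ N) (i : ℕ) :
    gtComplement m N g k i = if i < k then m - g k (k - 1 - i) else 0 := by
  rw [gtComplement, min_eq_left hk]

lemma gtComplement_of_ge (g : ℕ → ℕ → ℕ) {k : ℕ} (hk : N ≤ k) (i : ℕ) :
    gtComplement m N g k i = if i < N then m - g N (N - 1 - i) else 0 := by
  rw [gtComplement, min_eq_right hk]

lemma IsGTPattern.gtComplement (hν : ∀ i, N ≤ i → ν.rowLen i = 0)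
    (hνμ : ∀ i < N, ν.rowLen i = m - μ.rowLen (N - 1 - i)) (hg : IsGTPattern μ N g) :
    IsGTPattern ν N (gtComplement m N g) where
  apply_zero i := by simp [_root_.gtComplement]
  le_succ k i := by
    rcases lt_or_ge k N with hk | hk
    · rw [gtComplement_of_le g hk.le, gtComplement_of_le g hk]
      have := hg.succ_succ_le k (k - 1 - i)
      split_ifs <;> grind
    · rw [gtComplement_of_ge g hk, gtComplement_of_ge g (hk.trans k.le_succ)]
  succ_succ_le k i := by
    rcases lt_or_ge k N with hk | hk
    · rw [gtComplement_of_le g hk.le, gtComplement_of_le g hk]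
      have := hg.le_succ k (k - 1 - i)
      split_ifs <;> grind
    · rw [gtComplement_of_ge g hk, gtComplement_of_ge g (hk.trans k.le_succ)]
      have := μ.rowLen_anti (N - 1 - (i + 1)) (N - 1 - i) (by omega)
      rw [← hg.eq_rowLen N _ le_rfl, ← hg.eq_rowLen N _ le_rfl] at this
      split_ifs <;> omega
  eq_rowLen k i hk := by
    rw [gtComplement_of_ge g hk]
    split_ifs with hi
    · rw [hg.eq_rowLen N _ le_rfl, hνμ i hi]
    · rw [hν i (not_lt.mp hi)]

lemma gtComplement_gtComplement (hμ : ∀ i, μ.rowLen i ≤ m)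
    (hg : IsGTPattern μ N g) : gtComplement m N (gtComplement m N g) = g := by
  funext k i
  rw [← hg.apply_min k i, _root_.gtComplement]
  split_ifs with hi
  · rw [gtComplement_of_le g (min_le_right k N), if_pos (by omega),
      show min k N - 1 - (min k N - 1 - i) = i by omega]
    have := hg.le_rowLen (min k N) i
    have := hμ i
    omega
  · rw [hg.eq_zero_of_le (not_lt.mp hi)]

end Complement

theorem ssytCount_eq_of_rowLen_eq_sub {μ ν : YoungDiagram} {N m : ℕ}
    (hμ_le : ∀ i, μ.rowLen i ≤ m) (hμ : ∀ i, N ≤ i → μ.rowLen i = 0)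
    (hν : ∀ i, N ≤ i → ν.rowLen i = 0)
    (hνμ : ∀ i < N, ν.rowLen i = m - μ.rowLen (N - 1 - i)) :
    ssytCount μ N = ssytCount ν N := by
  have hν_le (i : ℕ) : ν.rowLen i ≤ m := by
    rcases lt_or_ge i N with hi | hi
    · rw [hνμ i hi]; exact Nat.sub_le m _
    · rw [hν i hi]; exact Nat.zero_le m
  have hμν (i : ℕ) (hi : i < N) : μ.rowLen i = m - ν.rowLen (N - 1 - i) := by
    rw [hνμ _ (by omega), show N - 1 - (N - 1 - i) = i by omega]
    have := hμ_le i
    omega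
  have hbij : Set.BijOn (gtComplement m N) {g | IsGTPattern μ N g} {g | IsGTPattern ν N g} :=
    Set.InvOn.bijOn ⟨fun g hg => gtComplement_gtComplement hμ_le hg,
      fun g hg => gtComplement_gtComplement hν_le hg⟩
      (fun g hg => IsGTPattern.gtComplement hν hνμ hg)
      (fun g hg => IsGTPattern.gtComplement hμ hμν hg)
  rw [ssytCount_eq_ncard_isGTPattern, ssytCount_eq_ncard_isGTPattern, ← hbij.image_eq,
    hbij.injOn.ncard_image]

lemma YoungDiagram.rowLen_eq_of_forall_mem_iff {μ : YoungDiagram} {i c : ℕ}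
    (h : ∀ j, (i, j) ∈ μ ↔ j < c) : μ.rowLen i = c :=
  eq_of_forall_lt_iff fun j => by rw [← YoungDiagram.mem_iff_lt_rowLen, h]

lemma rowLen_muShape (n i : ℕ) : (muShape n).rowLen i = n - i / 2 :=
  YoungDiagram.rowLen_eq_of_forall_mem_iff fun j => by
    change (i, j) ∈ (muShape n).cells ↔ _
    simp only [muShape, mem_filter, mem_product, mem_range]
    omega

lemma rowLen_lambdaShape (n i : ℕ) : (lambdaShape n).rowLen i = n - (i + 1) / 2 :=
  YoungDiagram.rowLen_eq_of_forall_mem_iff fun j => by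
    change (i, j) ∈ (lambdaShape n).cells ↔ _
    simp only [lambdaShape, mem_filter, mem_product, mem_range]
    omega

theorem ssyt_count_shape_eq_general (n : ℕ) :
    ssytCount (muShape n) (2*n+1) = ssytCount (lambdaShape n) (2*n+1) := by
  apply ssytCount_eq_of_rowLen_eq_sub (m := n) <;> intro i <;>
    simp only [rowLen_muShape, rowLen_lambdaShape] <;> omega

/-- The number of semistandard Young tableaux of shape `(n, n, n-1, n-1, …, 2, 2, 1, 1)`
with entries from `{1, …, 2n+1}` equals the number of semistandard Young tableaux of shape
`(n, n-1, n-1, …, 2, 2, 1, 1)` with entries from `{1, …, 2n+1}`. -/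
theorem ssyt_count_shape_eq (n : ℕ) (hn : 1 ≤ n) :
    ssytCount (muShape n) (2*n+1) = ssytCount (lambdaShape n) (2*n+1) :=
  ssyt_count_shape_eq_general n
end

section
/- Let A be a (2n+1)×(2n+1) DASASM and let 1 ≤ i ≤ n. Consider the sequence of 2n+1 entries A_{1,i}, A_{2,i}, …, A_{i−1,i}, A_{i,i}, A_{i,i+1}, …, A_{i,2n+2−i}, A_{i−1,2n+2−i}, …, A_{1,2n+2−i} (read down column i to the diagonal, then right along row i to the antidiagonal, then up column 2n+2−i). Then the nonzero entries of this sequence alternate in sign and sum to 1; consequently, the number of zero entries in the sequence is even and at most 2n. -/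
/-- For a `(2n+1) × (2n+1)` matrix `A` and `0 ≤ i ≤ n` (0-based), the sequence of `2n+1`
entries (indexed by `p = 0, …, 2n`) obtained by reading down column `i` to the diagonal,
then right along row `i` to the antidiagonal, then up column `2n-i` (0-based indexing). -/
def dasasmSeq (n : ℕ) (A : Matrix (Fin (2*n+1)) (Fin (2*n+1)) ℤ) (i p : ℕ) : ℤ :=
  if h : i ≤ n ∧ p ≤ 2*n then
    if p < i then A ⟨p, by omega⟩ ⟨i, by omega⟩
    else if p ≤ 2*n - i then A ⟨i, by omega⟩ ⟨p, by omega⟩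
    else A ⟨2*n - p, by omega⟩ ⟨2*n - i, by omega⟩
  else 0

private lemma sum_range_eq_sum_Iic {m : ℕ} (f : ℕ → ℤ) (g : Fin m → ℤ) (p : ℕ) (hp : p < m)
    (hfg : ∀ q : Fin m, q.1 ≤ p → f q.1 = g q) :
    ∑ q ∈ Finset.range (p+1), f q = ∑ q ∈ Finset.Iic (⟨p, hp⟩ : Fin m), g q := by
  refine Finset.sum_nbij' (i := fun q => (⟨q % m, Nat.mod_lt _ (by omega)⟩ : Fin m))
    (j := fun q => q.1) ?_ ?_ ?_ ?_ ?_
  · intro a ha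
    rw [Finset.mem_range] at ha
    rw [Finset.mem_Iic, Fin.mk_le_mk]
    rw [Nat.mod_eq_of_lt (by omega)]
    omega
  · intro a ha
    rw [Finset.mem_Iic] at ha
    rw [Finset.mem_range]
    exact Nat.lt_succ_of_le (Fin.le_def.mp ha)
  · intro a ha
    rw [Finset.mem_range] at ha
    simp only
    exact Nat.mod_eq_of_lt (by omega)
  · intro a ha
    apply Fin.ext
    simp only
    exact Nat.mod_eq_of_lt a.isLt
  · intro a ha
    rw [Finset.mem_range] at ha
    have : a % m = a := Nat.mod_eq_of_lt (by omega)
    simp only [this]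
    exact hfg ⟨a, by omega⟩ (Nat.lt_succ_iff.mp ha)

/-- For a `(2n+1) × (2n+1)` DASASM `A` and `1 ≤ i ≤ n` (1-based), the nonzero entries of the
sequence reading down column `i` to the diagonal, right along row `i` to the antidiagonal,
and up column `2n+2-i` alternate in sign and sum to `1` (expressed via partial sums);
consequently the number of zero entries in the sequence is even and at most `2n`. -/
theorem dasasm_lap_sequence (n : ℕ) (A : Matrix (Fin (2*n+1)) (Fin (2*n+1)) ℤ)
    (hA : IsDasasm A) (i : ℕ) (hi1 : 1 ≤ i) (hi2 : i ≤ n) :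
    (∀ p ≤ 2*n,
      (∑ q ∈ Finset.range (p+1), dasasmSeq n A (i-1) q) = 0 ∨
      (∑ q ∈ Finset.range (p+1), dasasmSeq n A (i-1) q) = 1) ∧
    (∑ q ∈ Finset.range (2*n+1), dasasmSeq n A (i-1) q) = 1 ∧
    Even ((Finset.range (2*n+1)).filter fun q => dasasmSeq n A (i-1) q = 0).card ∧
    ((Finset.range (2*n+1)).filter fun q => dasasmSeq n A (i-1) q = 0).card ≤ 2*n := by
  obtain ⟨⟨hent, hrowp, hrowt, hcolp, hcolt⟩, hsym⟩ := hA
  have hjn : i - 1 ≤ n := by omega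
  have hj1 : i - 1 < 2*n+1 := by omega
  -- The whole lap sequence equals row `i-1` of `A`.
  have key : ∀ q : Fin (2*n+1), dasasmSeq n A (i-1) q.1 = A ⟨i-1, hj1⟩ q := by
    intro ⟨q, hq⟩
    simp only [dasasmSeq]
    rw [dif_pos ⟨hjn, by omega⟩]
    split_ifs with h1 h2
    · exact ((hsym ⟨i-1, hj1⟩ ⟨q, hq⟩).1).symm
    · rfl
    · have := (hsym ⟨i-1, hj1⟩ ⟨q, hq⟩).2
      rw [this]
      congr 1 <;> apply Fin.ext <;> simp [Fin.val_rev]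
  -- Partial sums
  have hpart : ∀ p (hp : p ≤ 2*n),
      (∑ q ∈ Finset.range (p+1), dasasmSeq n A (i-1) q)
        = ∑ q ∈ Finset.Iic (⟨p, by omega⟩ : Fin (2*n+1)), A ⟨i-1, hj1⟩ q := by
    intro p hp
    exact sum_range_eq_sum_Iic _ _ p (by omega) (fun q _ => key q)
  have h1 : ∀ p ≤ 2*n,
      (∑ q ∈ Finset.range (p+1), dasasmSeq n A (i-1) q) = 0 ∨
      (∑ q ∈ Finset.range (p+1), dasasmSeq n A (i-1) q) = 1 := by
    intro p hp
    rw [hpart p hp]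
    exact hrowp _ _
  have huniv : (Finset.Iic (⟨2*n, by omega⟩ : Fin (2*n+1))) = Finset.univ := by
    ext x
    simp [Fin.le_def]
    omega
  have h2 : (∑ q ∈ Finset.range (2*n+1), dasasmSeq n A (i-1) q) = 1 := by
    rw [hpart (2*n) le_rfl, huniv]
    exact hrowt _
  refine ⟨h1, h2, ?_⟩
  -- Counting zeros
  have hval : ∀ q, q < 2*n+1 → dasasmSeq n A (i-1) q = -1 ∨ dasasmSeq n A (i-1) q = 0 ∨
      dasasmSeq n A (i-1) q = 1 := by
    intro q hq
    rw [show q = (⟨q, hq⟩ : Fin (2*n+1)).1 from rfl, key ⟨q, hq⟩]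
    exact hent _ _
  have hcards : ((Finset.range (2*n+1)).filter fun q => dasasmSeq n A (i-1) q = 0).card
      + ((Finset.range (2*n+1)).filter fun q => ¬ dasasmSeq n A (i-1) q = 0).card = 2*n+1 := by
    rw [Finset.card_filter_add_card_filter_not, Finset.card_range]
  have hsq : (∑ q ∈ Finset.range (2*n+1), (dasasmSeq n A (i-1) q)^2)
      = (((Finset.range (2*n+1)).filter fun q => ¬ dasasmSeq n A (i-1) q = 0).card : ℤ) := by
    rw [Finset.card_filter, Nat.cast_sum]
    refine Finset.sum_congr rfl fun q hq => ?_
    rcases hval q (Finset.mem_range.mp hq) with h | h | h <;> simp [h]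
  have heven : Even (∑ q ∈ Finset.range (2*n+1),
      ((dasasmSeq n A (i-1) q)^2 - dasasmSeq n A (i-1) q)) := by
    apply Finset.even_sum
    intro q hq
    rcases hval q (Finset.mem_range.mp hq) with h | h | h <;> simp [h]
  rw [Finset.sum_sub_distrib, hsq, h2] at heven
  obtain ⟨r, hr⟩ := heven
  constructor
  · rw [Nat.even_iff]
    omega
  · omega
end
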